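/- arXiv:math/0008069 — 5 statements merged into one kernel-verified Lean document; each statement's English description precedes it below -/
import Mathlib

section
/- The polynomial system f₁(x₁,x₂) = x₁^108 + 1.1·x₂^54 − 1.1·x₂ and f₂(x₁,x₂) = x₂^108 + 1.1·x₁^54 − 1.1·x₁ has at least 5 common roots in the open positive quadrant ℝ²₊; in particular, the maximal number of isolated common roots in ℝ²₊ of a pair of bivariate trinomials is at least 5. -/
open Real Set

/-- The open positive quadrant in the plane. -/
def PosQuad : Set (ℝ × ℝ) := {p | 0 < p.1 ∧ 0 < p.2}

/-- `f` is a bivariate `m`-nomial with real exponents. -/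
def IsMNomial (m : ℕ) (f : ℝ × ℝ → ℝ) : Prop :=
  ∃ (c : Fin m → ℝ) (e : Fin m → ℝ × ℝ),
    (∀ i, c i ≠ 0) ∧ Function.Injective e ∧
    ∀ p ∈ PosQuad, f p = ∑ i, c i * p.1 ^ (e i).1 * p.2 ^ (e i).2

/-- The set of common roots of `(f₁, f₂)` in the open positive quadrant. -/
def ZeroSet (f₁ f₂ : ℝ × ℝ → ℝ) : Set (ℝ × ℝ) :=
  {p ∈ PosQuad | f₁ p = 0 ∧ f₂ p = 0}

/-- The set of isolated common roots of `(f₁, f₂)` in the open positive quadrant. -/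
def IsolatedRoots (f₁ f₂ : ℝ × ℝ → ℝ) : Set (ℝ × ℝ) :=
  {p | p ∈ ZeroSet f₁ f₂ ∧ ∃ U : Set (ℝ × ℝ), IsOpen U ∧ U ∩ ZeroSet f₁ f₂ = {p}}

noncomputable section HaasAux

/-- `F1` of Haas' system. -/
def HaasF1 : ℝ × ℝ → ℝ := fun p => p.1 ^ (108 : ℝ) + 1.1 * p.2 ^ (54 : ℝ) - 1.1 * p.2

/-- `F2` of Haas' system. -/
def HaasF2 : ℝ × ℝ → ℝ := fun p => p.2 ^ (108 : ℝ) + 1.1 * p.1 ^ (54 : ℝ) - 1.1 * p.1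

def Uf (y : ℝ) : ℝ := 1.1 * (y - y ^ (54 : ℕ))

def Xf (y : ℝ) : ℝ := Uf y ^ ((1 : ℝ) / 108)

def Hf (y : ℝ) : ℝ := y ^ (108 : ℕ) + 1.1 * Uf y ^ ((1 : ℝ) / 2) - 1.1 * Xf y

lemma rpow_108 (x : ℝ) : x ^ (108 : ℝ) = x ^ (108 : ℕ) := by
  rw [← Real.rpow_natCast x 108]; norm_num

lemma rpow_54 (x : ℝ) : x ^ (54 : ℝ) = x ^ (54 : ℕ) := by
  rw [← Real.rpow_natCast x 54]; norm_num

lemma Uf_pos {y : ℝ} (h0 : 0 < y) (h1 : y < 1) : 0 < Uf y := by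
  have h53 : y ^ (53 : ℕ) < 1 := pow_lt_one₀ h0.le h1 (by norm_num)
  have : y ^ (54 : ℕ) < y := by
    calc y ^ (54 : ℕ) = y * y ^ (53 : ℕ) := by ring
    _ < y * 1 := by exact mul_lt_mul_of_pos_left h53 h0
    _ = y := by ring
  unfold Uf; nlinarith

lemma rpow_le_of_pow_le {n : ℕ} (hn : (n : ℝ) ≠ 0) {x a : ℝ} (hx : 0 ≤ x) (ha : 0 ≤ a)
    (h : x ≤ a ^ n) : x ^ ((1 : ℝ) / n) ≤ a := by
  have key : ((a ^ n : ℝ)) ^ ((1 : ℝ) / n) = a := by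
    rw [← Real.rpow_natCast a n, ← Real.rpow_mul ha, mul_one_div, div_self hn, Real.rpow_one]
  calc x ^ ((1 : ℝ) / n) ≤ (a ^ n) ^ ((1 : ℝ) / n) :=
        Real.rpow_le_rpow hx h (by positivity)
    _ = a := key

lemma le_rpow_of_pow_le {n : ℕ} (hn : (n : ℝ) ≠ 0) {x a : ℝ} (ha : 0 ≤ a)
    (h : a ^ n ≤ x) : a ≤ x ^ ((1 : ℝ) / n) := by
  have key : ((a ^ n : ℝ)) ^ ((1 : ℝ) / n) = a := by
    rw [← Real.rpow_natCast a n, ← Real.rpow_mul ha, mul_one_div, div_self hn, Real.rpow_one]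
  calc a = (a ^ n) ^ ((1 : ℝ) / n) := key.symm
    _ ≤ x ^ ((1 : ℝ) / n) := Real.rpow_le_rpow (by positivity) h (by positivity)

lemma mem_zeroSet_iff {p : ℝ × ℝ} :
    p ∈ ZeroSet HaasF1 HaasF2 ↔ 0 < p.2 ∧ p.2 < 1 ∧ Hf p.2 = 0 ∧ p.1 = Xf p.2 := by
  obtain ⟨x, y⟩ := p
  simp only [ZeroSet, PosQuad, HaasF1, HaasF2, Set.mem_setOf_eq, Set.mem_sep_iff]
  constructor
  · rintro ⟨⟨hx, hy⟩, e1, e2⟩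
    have hu : x ^ (108 : ℕ) = Uf y := by
      rw [rpow_108, rpow_54] at e1; unfold Uf; linarith
    have hupos : 0 < Uf y := hu ▸ pow_pos hx 108
    have hy1 : y < 1 := by
      by_contra hc
      push_neg at hc
      have : y ≤ y ^ (54 : ℕ) := le_self_pow₀ hc (by norm_num)
      unfold Uf at hupos; nlinarith
    have hxX : x = Xf y := by
      have : (x ^ (108 : ℕ) : ℝ) ^ ((1 : ℝ) / 108) = x := by
        rw [← Real.rpow_natCast x 108, ← Real.rpow_mul hx.le]
        norm_num
      rw [Xf, ← hu, this]
    have hx54 : x ^ (54 : ℕ) = Uf y ^ ((1 : ℝ) / 2) := by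
      have h2 : ((x ^ (54 : ℕ) : ℝ)) ^ (2 : ℕ) = Uf y := by
        rw [← pow_mul, ← hu]
      have : ((x ^ (54 : ℕ) : ℝ) ^ (2 : ℕ)) ^ ((1 : ℝ) / 2) = x ^ (54 : ℕ) := by
        rw [← Real.rpow_natCast (x ^ (54:ℕ)) 2, ← Real.rpow_mul (by positivity)]
        norm_num
      rw [← h2, this]
    refine ⟨hy, hy1, ?_, hxX⟩
    rw [rpow_108, rpow_54, hx54] at e2
    unfold Xf at hxX
    unfold Hf Xf
    linarith [hxX ▸ e2]
  · rintro ⟨hy, hy1, hH, hxX⟩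
    have hupos : 0 < Uf y := Uf_pos hy hy1
    have hx : 0 < x := by rw [hxX]; exact Real.rpow_pos_of_pos hupos _
    have hx108 : x ^ (108 : ℝ) = Uf y := by
      rw [hxX, Xf, ← Real.rpow_mul hupos.le]
      norm_num
    have hx54 : x ^ (54 : ℝ) = Uf y ^ ((1 : ℝ) / 2) := by
      rw [hxX, Xf, ← Real.rpow_mul hupos.le]
      norm_num
    refine ⟨⟨hx, hy⟩, ?_, ?_⟩
    · rw [hx108, rpow_54]; unfold Uf; ring
    · rw [rpow_108, hx54]
      unfold Xf at hxX
      unfold Hf Xf at hH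
      linarith [hxX ▸ hH]

lemma cont_Hf : Continuous Hf := by
  have hU : Continuous Uf := by unfold Uf; continuity
  have h1 : Continuous fun y => Uf y ^ ((1 : ℝ) / 2) :=
    hU.rpow_const fun x => Or.inr (by norm_num)
  have h2 : Continuous fun y => Uf y ^ ((1 : ℝ) / 108) :=
    hU.rpow_const fun x => Or.inr (by norm_num)
  unfold Hf Xf
  continuity

lemma sign_neg_at {y a b : ℝ} (ha : 0 ≤ a) (hb : 0 ≤ b) (hU : 0 ≤ Uf y)
    (h1 : Uf y ≤ b ^ (2 : ℕ)) (h2 : a ^ (108 : ℕ) ≤ Uf y)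
    (h3 : y ^ (108 : ℕ) + 1.1 * b - 1.1 * a < 0) : Hf y < 0 := by
  have k1 : Uf y ^ ((1 : ℝ) / 2) ≤ b := rpow_le_of_pow_le (by norm_num) hU hb h1
  have k2 : a ≤ Uf y ^ ((1 : ℝ) / 108) := le_rpow_of_pow_le (by norm_num) ha h2
  unfold Hf Xf
  nlinarith

lemma sign_pos_at {y a b : ℝ} (ha : 0 ≤ a) (hb : 0 ≤ b)
    (h1 : b ^ (2 : ℕ) ≤ Uf y) (h2 : Uf y ≤ a ^ (108 : ℕ))
    (h3 : 0 < y ^ (108 : ℕ) + 1.1 * b - 1.1 * a) : 0 < Hf y := by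
  have hU : 0 ≤ Uf y := le_trans (by positivity) h1
  have k1 : b ≤ Uf y ^ ((1 : ℝ) / 2) := le_rpow_of_pow_le (by norm_num) hb h1
  have k2 : Uf y ^ ((1 : ℝ) / 108) ≤ a := rpow_le_of_pow_le (by norm_num) hU ha h2
  unfold Hf Xf
  nlinarith

lemma sign_h1 : Hf (9/10) < 0 := by
  apply sign_neg_at (a := 15623/15625) (b := 4965583/5000000) <;> norm_num [Uf]

lemma sign_h2 : 0 < Hf (93/100) := by
  apply sign_pos_at (a := 10000107/10000000) (b := 10005743/10000000) <;> norm_num [Uf]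

lemma sign_h3 : Hf (94/100) < 0 := by
  apply sign_neg_at (a := 4999771/5000000) (b := 4987657/5000000) <;> norm_num [Uf]

lemma sign_h4 : 0 < Hf (995/1000) := by
  apply sign_pos_at (a := 2468599/2500000) (b := 5053227/10000000) <;> norm_num [Uf]

lemma sign_h5 : Hf (99999/100000) < 0 := by
  apply sign_neg_at (a := 9333647/10000000) (b := 120711/5000000) <;> norm_num [Uf]

lemma sign_h6 : 0 < Hf (999999/1000000) := by
  apply sign_pos_at (a := 9136779/10000000) (b := 76353/10000000) <;> norm_num [Uf]

lemma exists_root_incr {a b : ℝ} (hab : a ≤ b) (h1 : Hf a < 0) (h2 : 0 < Hf b) :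
    ∃ y ∈ Set.Ioo a b, Hf y = 0 := by
  have := intermediate_value_Ioo hab cont_Hf.continuousOn (a := a) (b := b)
  have h0 : (0:ℝ) ∈ Set.Ioo (Hf a) (Hf b) := ⟨h1, h2⟩
  obtain ⟨y, hy, hy0⟩ := this h0
  exact ⟨y, hy, hy0⟩

lemma exists_root_decr {a b : ℝ} (hab : a ≤ b) (h1 : 0 < Hf a) (h2 : Hf b < 0) :
    ∃ y ∈ Set.Ioo a b, Hf y = 0 := by
  have := intermediate_value_Ioo' hab cont_Hf.continuousOn (a := a) (b := b)
  have h0 : (0:ℝ) ∈ Set.Ioo (Hf b) (Hf a) := ⟨h2, h1⟩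
  obtain ⟨y, hy, hy0⟩ := this h0
  exact ⟨y, hy, hy0⟩

lemma analyticAt_rlog {x : ℝ} (hx : 0 < x) : AnalyticAt ℝ Real.log x := by
  have h2 : AnalyticAt ℝ (fun t : ℝ => Complex.log (t : ℂ)) x :=
    AnalyticAt.comp (g := Complex.log)
      ((analyticAt_clog (by simp [Complex.mem_slitPlane_iff, hx])).restrictScalars)
      (Complex.ofRealCLM.analyticAt x)
  have h1 : AnalyticAt ℝ (fun t : ℝ => (Complex.log (t : ℂ)).re) x :=
    (Complex.reCLM.analyticAt _).comp h2
  apply h1.congr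
  filter_upwards [eventually_gt_nhds hx] with t ht
  simp [Complex.log_ofReal_re]

lemma cont_Uf : Continuous Uf := by unfold Uf; continuity

lemma analyticAt_Hf {y : ℝ} (h0 : 0 < y) (h1 : y < 1) : AnalyticAt ℝ Hf y := by
  have hUa : AnalyticAt ℝ Uf y :=
    analyticAt_const.mul ((analyticAt_id).sub ((analyticAt_id).pow 54))
  have hupos : 0 < Uf y := Uf_pos h0 h1
  have hev : ∀ᶠ t in nhds y, 0 < Uf t :=
    (cont_Uf.continuousAt (x := y)).eventually (eventually_gt_nhds hupos)
  have key : ∀ c : ℝ, AnalyticAt ℝ (fun t => Uf t ^ (c : ℝ)) y := by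
    intro c
    have ha : AnalyticAt ℝ (fun t => Real.exp (Real.log (Uf t) * c)) y :=
      analyticAt_rexp.comp (((analyticAt_rlog hupos).comp hUa).mul analyticAt_const)
    apply ha.congr
    filter_upwards [hev] with t ht
    rw [Real.rpow_def_of_pos ht]
  have : AnalyticAt ℝ
      (fun t => t ^ (108 : ℕ) + 1.1 * Uf t ^ ((1:ℝ)/2) - 1.1 * Uf t ^ ((1:ℝ)/108)) y :=
    (((analyticAt_id).pow 108).add (analyticAt_const.mul (key (1/2)))).sub
      (analyticAt_const.mul (key (1/108)))
  exact this

lemma root_mem_isolated {y0 : ℝ} (h0 : 0 < y0) (h1 : y0 < 1) (hz : Hf y0 = 0) :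
    (Xf y0, y0) ∈ IsolatedRoots HaasF1 HaasF2 := by
  have hmem : (Xf y0, y0) ∈ ZeroSet HaasF1 HaasF2 :=
    mem_zeroSet_iff.mpr ⟨h0, h1, hz, rfl⟩
  refine ⟨hmem, ?_⟩
  rcases (analyticAt_Hf h0 h1).eventually_eq_zero_or_eventually_ne_zero with h | h
  · exfalso
    have hA : AnalyticOnNhd ℝ Hf (Ioo (0:ℝ) 1) := fun z hz => analyticAt_Hf hz.1 hz.2
    have heq : EqOn Hf 0 (Ioo (0:ℝ) 1) :=
      hA.eqOn_zero_of_preconnected_of_eventuallyEq_zero isPreconnected_Ioo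
        (mem_Ioo.mpr ⟨h0, h1⟩) h
    have h93 := heq (show (93/100 : ℝ) ∈ Ioo (0:ℝ) 1 by norm_num)
    have := sign_h2
    rw [h93] at this
    simp at this
  · rw [Filter.eventually_iff, ← Filter.eventually_iff] at h
    have h' : ∀ᶠ z in nhds y0, (z ≠ y0 → Hf z ≠ 0) ∧ 0 < z ∧ z < 1 := by
      have e1 : ∀ᶠ z in nhds y0, z ≠ y0 → Hf z ≠ 0 := eventually_nhdsWithin_iff.mp h
      have e2 : ∀ᶠ z in nhds y0, 0 < z := eventually_gt_nhds h0
      have e3 : ∀ᶠ z in nhds y0, z < 1 := eventually_lt_nhds h1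
      filter_upwards [e1, e2, e3] with z hz1 hz2 hz3 using ⟨hz1, hz2, hz3⟩
    obtain ⟨t, hpt, ht_open, hyt⟩ := eventually_nhds_iff.mp h'
    refine ⟨{p : ℝ × ℝ | p.2 ∈ t}, ht_open.preimage continuous_snd, ?_⟩
    ext p
    simp only [Set.mem_inter_iff, Set.mem_setOf_eq, Set.mem_singleton_iff]
    constructor
    · rintro ⟨hpt2, hpZ⟩
      obtain ⟨hp0, hp1, hpH, hpX⟩ := mem_zeroSet_iff.mp hpZ
      obtain ⟨hne, _, _⟩ := hpt p.2 hpt2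
      have : p.2 = y0 := by
        by_contra hc
        exact hne hc hpH
      have hx : p.1 = Xf y0 := by rw [hpX, this]
      exact Prod.ext hx this
    · rintro rfl
      exact ⟨hyt, hmem⟩

lemma trinomial_F1 : IsMNomial 3 HaasF1 := by
  refine ⟨![1, 1.1, -1.1], ![(108, 0), (0, 54), (0, 1)], ?_, ?_, ?_⟩
  · intro i; fin_cases i <;> norm_num
  · intro i j hij
    fin_cases i <;> fin_cases j <;> simp_all
  · intro p hp
    simp [HaasF1, Fin.sum_univ_three, Real.rpow_zero, Real.rpow_one]
    ring

lemma trinomial_F2 : IsMNomial 3 HaasF2 := by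
  refine ⟨![1, 1.1, -1.1], ![(0, 108), (54, 0), (1, 0)], ?_, ?_, ?_⟩
  · intro i; fin_cases i <;> norm_num
  · intro i j hij
    fin_cases i <;> fin_cases j <;> simp_all
  · intro p hp
    simp [HaasF2, Fin.sum_univ_three, Real.rpow_zero, Real.rpow_one]
    ring

lemma five_roots : ∃ y1 y2 y3 y4 y5 : ℝ,
    (0 < y1 ∧ y1 < 1 ∧ Hf y1 = 0) ∧ (0 < y2 ∧ y2 < 1 ∧ Hf y2 = 0) ∧
    (0 < y3 ∧ y3 < 1 ∧ Hf y3 = 0) ∧ (0 < y4 ∧ y4 < 1 ∧ Hf y4 = 0) ∧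
    (0 < y5 ∧ y5 < 1 ∧ Hf y5 = 0) ∧
    y1 < y2 ∧ y2 < y3 ∧ y3 < y4 ∧ y4 < y5 := by
  obtain ⟨y1, hy1, hz1⟩ := exists_root_incr (by norm_num) sign_h1 sign_h2
  obtain ⟨y2, hy2, hz2⟩ := exists_root_decr (by norm_num) sign_h2 sign_h3
  obtain ⟨y3, hy3, hz3⟩ := exists_root_incr (by norm_num) sign_h3 sign_h4
  obtain ⟨y4, hy4, hz4⟩ := exists_root_decr (by norm_num) sign_h4 sign_h5
  obtain ⟨y5, hy5, hz5⟩ := exists_root_incr (by norm_num) sign_h5 sign_h6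
  obtain ⟨a1, b1⟩ := hy1; obtain ⟨a2, b2⟩ := hy2; obtain ⟨a3, b3⟩ := hy3
  obtain ⟨a4, b4⟩ := hy4; obtain ⟨a5, b5⟩ := hy5
  exact ⟨y1, y2, y3, y4, y5,
    ⟨by linarith, by linarith, hz1⟩, ⟨by linarith, by linarith, hz2⟩,
    ⟨by linarith, by linarith, hz3⟩, ⟨by linarith, by linarith, hz4⟩,
    ⟨by linarith, by linarith, hz5⟩,
    by linarith, by linarith, by linarith, by linarith⟩

lemma encard_five {S : Set (ℝ × ℝ)} {y1 y2 y3 y4 y5 : ℝ} {x1 x2 x3 x4 x5 : ℝ}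
    (h12 : y1 < y2) (h23 : y2 < y3) (h34 : y3 < y4) (h45 : y4 < y5)
    (m1 : (x1, y1) ∈ S) (m2 : (x2, y2) ∈ S) (m3 : (x3, y3) ∈ S)
    (m4 : (x4, y4) ∈ S) (m5 : (x5, y5) ∈ S) : 5 ≤ S.encard := by
  have hsub : {(x1, y1), (x2, y2), (x3, y3), (x4, y4), (x5, y5)} ⊆ S := by
    intro p hp
    simp only [Set.mem_insert_iff, Set.mem_singleton_iff] at hp
    rcases hp with rfl | rfl | rfl | rfl | rfl <;> assumption
  have hne : ∀ {a c b d : ℝ}, b < d → ((a, b) : ℝ × ℝ) ≠ (c, d) :=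
    fun h hab => absurd (congrArg Prod.snd hab) (ne_of_lt h)
  have c2 : ({(x4, y4), (x5, y5)} : Set (ℝ × ℝ)).encard = 2 :=
    Set.encard_pair (hne h45)
  have c3 : ({(x3, y3), (x4, y4), (x5, y5)} : Set (ℝ × ℝ)).encard = 3 := by
    rw [Set.encard_insert_of_notMem (by
      simp only [Set.mem_insert_iff, Set.mem_singleton_iff]
      push_neg
      exact ⟨hne h34, hne (by linarith)⟩), c2]
    rfl
  have c4 : ({(x2, y2), (x3, y3), (x4, y4), (x5, y5)} : Set (ℝ × ℝ)).encard = 4 := by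
    rw [Set.encard_insert_of_notMem (by
      simp only [Set.mem_insert_iff, Set.mem_singleton_iff]
      push_neg
      exact ⟨hne h23, hne (by linarith), hne (by linarith)⟩), c3]
    rfl
  have c5 : ({(x1, y1), (x2, y2), (x3, y3), (x4, y4), (x5, y5)} : Set (ℝ × ℝ)).encard = 5 := by
    rw [Set.encard_insert_of_notMem (by
      simp only [Set.mem_insert_iff, Set.mem_singleton_iff]
      push_neg
      exact ⟨hne h12, hne (by linarith), hne (by linarith), hne (by linarith)⟩), c4]
    rfl
  calc (5 : ℕ∞) = _ := c5.symm
    _ ≤ S.encard := Set.encard_mono hsub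

end HaasAux

/-- Haas' system `(x₁¹⁰⁸ + 1.1 x₂⁵⁴ − 1.1 x₂, x₂¹⁰⁸ + 1.1 x₁⁵⁴ − 1.1 x₁)` has at
least 5 roots in the positive quadrant; in particular, the maximal number of
isolated roots in the positive quadrant of a pair of bivariate trinomials is at
least 5. -/
theorem haas_example_at_least_five_roots :
    5 ≤ (ZeroSet
          (fun p => p.1 ^ (108 : ℝ) + 1.1 * p.2 ^ (54 : ℝ) - 1.1 * p.2)
          (fun p => p.2 ^ (108 : ℝ) + 1.1 * p.1 ^ (54 : ℝ) - 1.1 * p.1)).encard ∧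
    ∃ f₁ f₂ : ℝ × ℝ → ℝ, IsMNomial 3 f₁ ∧ IsMNomial 3 f₂ ∧
      5 ≤ (IsolatedRoots f₁ f₂).encard := by

  obtain ⟨y1, y2, y3, y4, y5, ⟨p1a, p1b, p1c⟩, ⟨p2a, p2b, p2c⟩, ⟨p3a, p3b, p3c⟩,
    ⟨p4a, p4b, p4c⟩, ⟨p5a, p5b, p5c⟩, h12, h23, h34, h45⟩ := five_roots
  have m1 : (Xf y1, y1) ∈ ZeroSet HaasF1 HaasF2 := mem_zeroSet_iff.mpr ⟨p1a, p1b, p1c, rfl⟩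
  have m2 : (Xf y2, y2) ∈ ZeroSet HaasF1 HaasF2 := mem_zeroSet_iff.mpr ⟨p2a, p2b, p2c, rfl⟩
  have m3 : (Xf y3, y3) ∈ ZeroSet HaasF1 HaasF2 := mem_zeroSet_iff.mpr ⟨p3a, p3b, p3c, rfl⟩
  have m4 : (Xf y4, y4) ∈ ZeroSet HaasF1 HaasF2 := mem_zeroSet_iff.mpr ⟨p4a, p4b, p4c, rfl⟩
  have m5 : (Xf y5, y5) ∈ ZeroSet HaasF1 HaasF2 := mem_zeroSet_iff.mpr ⟨p5a, p5b, p5c, rfl⟩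
  constructor
  · show 5 ≤ (ZeroSet HaasF1 HaasF2).encard
    exact encard_five h12 h23 h34 h45 m1 m2 m3 m4 m5
  · refine ⟨HaasF1, HaasF2, trinomial_F1, trinomial_F2, ?_⟩
    exact encard_five h12 h23 h34 h45
      (root_mem_isolated p1a p1b p1c) (root_mem_isolated p2a p2b p2c)
      (root_mem_isolated p3a p3b p3c) (root_mem_isolated p4a p4b p4c)
      (root_mem_isolated p5a p5b p5c)
end

section
/- Let k ≥ 2 and let c_i ∈ ℝ and (a_i,b_i) ∈ ℝ² for 1 ≤ i ≤ k, where the pairs (a_i,b_i) are pairwise distinct and all different from (0,0), and set f(t) := 1 + Σ_{i=1}^k c_i t^{a_i}(1−t)^{b_i}. If f has exactly r roots in the open interval (0,1), then there exist real numbers c̃₁,…,c̃_k such that f̃(t) := 1 + Σ_{i=1}^k c̃_i t^{a_i}(1−t)^{b_i} has at least r roots in (0,1) and no root of f̃ in (0,1) is degenerate. -/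
/-!
Replacing `c` by `c / (1 - v)` turns `f` into `(f - v) / (1 - v)`, whose roots in `(0,1)` are
the solutions of `f = v`; they are all nondegenerate as soon as `v` is not a critical value of
`f`. By Sard's theorem in dimension one the critical values form a null set, so it suffices to
find a nonempty open interval of levels `v` each of which is attained at least `r` times.
Around the `r` roots `ζ` take test points `ζ ± η` with pairwise disjoint segments `[ζ, ζ ± η]`:
for `|v|` small, `v` is attained inside `(ζ, ζ ± η)` whenever `f (ζ ± η)` has the sign of `v`,
and at least `r` of the `2r` test points share a sign.
-/

open Real Set Metric MeasureTheory Filter Topology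

theorem intermediate_value_uIoo {α δ : Type*} [TopologicalSpace α]
    [ConditionallyCompleteLinearOrder α] [OrderTopology α] [DenselyOrdered α] [LinearOrder δ]
    [TopologicalSpace δ] [OrderClosedTopology δ] {a b : α} {f : α → δ} (hf : ContinuousOn f (uIcc a b)) :
    uIoo (f a) (f b) ⊆ f '' uIoo a b := by
  wlog hab : a ≤ b generalizing a b
  · rw [uIoo_comm, uIoo_comm a]
    exact this (uIcc_comm a b ▸ hf) (le_of_not_ge hab)
  rw [uIcc_of_le hab] at hf
  rw [uIoo_of_le hab, uIoo_eq_union]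
  exact union_subset (intermediate_value_Ioo hab hf) (intermediate_value_Ioo' hab hf)

theorem abs_sub_lt_and_pos_mul_of_mem_uIoo {a d x : ℝ} (hx : x ∈ uIoo a (a + d)) :
    |x - a| < |d| ∧ 0 < (x - a) * d := by
  rcases le_total 0 d with hd | hd
  · rw [uIoo_of_le (by linarith)] at hx
    rw [abs_of_nonneg hd, abs_of_pos (by linarith [hx.1])]
    exact ⟨by linarith [hx.2], mul_pos (by linarith [hx.1]) (by linarith [hx.1, hx.2])⟩
  · rw [uIoo_of_ge (by linarith)] at hx
    rw [abs_of_nonpos hd, abs_of_neg (by linarith [hx.2])]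
    exact ⟨by linarith [hx.1],
      mul_pos_of_neg_of_neg (by linarith [hx.2]) (by linarith [hx.1, hx.2])⟩

theorem Finset.card_le_encard_of_pairwiseDisjoint {ι α : Type*} {I : Finset ι} {J : ι → Set α}
    {A : Set α} (hJ : (I : Set ι).PairwiseDisjoint J) (hA : ∀ i ∈ I, (J i ∩ A).Nonempty) :
    (I.card : ℕ∞) ≤ A.encard := by
  obtain rfl | ⟨i₀, hi₀⟩ := I.eq_empty_or_nonempty
  · simp
  have : Nonempty α := ⟨(hA i₀ hi₀).some⟩
  choose! x hxJ hxA using hA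
  have hinj : InjOn x I := fun i hi j hj hij =>
    hJ.elim hi hj <| Set.not_disjoint_iff.2 ⟨x i, hxJ i hi, hij ▸ hxJ j hj⟩
  calc (I.card : ℕ∞) = (x '' I).encard := by
        rw [hinj.encard_image, encard_coe_eq_coe_finsetCard]
    _ ≤ A.encard := encard_le_encard (Set.image_subset_iff.2 hxA)

theorem Finset.exists_pos_closedBall_subset_and_two_mul_lt_dist {α : Type*} [MetricSpace α]
    (T : Finset α) {U : Set α} (hU : IsOpen U) (hTU : ↑T ⊆ U) :
    ∃ η > 0, ∀ x ∈ T, closedBall x η ⊆ U ∧ ∀ y ∈ T, x ≠ y → 2 * η < dist x y := by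
  have hball (x) (hx : x ∈ T) : ∀ᶠ η in 𝓝[>] (0 : ℝ), closedBall x η ⊆ U := by
    obtain ⟨ε, hε, hεU⟩ := Metric.isOpen_iff.1 hU x (hTU hx)
    filter_upwards [Ioo_mem_nhdsGT hε] with η hη
    exact (closedBall_subset_ball hη.2).trans hεU
  have hsep (x y : α) (hxy : x ≠ y) : ∀ᶠ η in 𝓝[>] (0 : ℝ), 2 * η < dist x y := by
    filter_upwards [Ioo_mem_nhdsGT (half_pos (dist_pos.2 hxy))] with η hη
    linarith [hη.2]
  have hall : ∀ᶠ η in 𝓝[>] (0 : ℝ),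
      0 < η ∧ ∀ x ∈ T, closedBall x η ⊆ U ∧ ∀ y ∈ T, x ≠ y → 2 * η < dist x y := by
    simp only [eventually_and, eventually_all_finset, eventually_imp_distrib_left]
    exact ⟨self_mem_nhdsWithin, fun x hx => ⟨hball x hx, fun y _ => hsep x y⟩⟩
  exact hall.exists

theorem volume_image_setOf_deriv_eq_zero {f : ℝ → ℝ} {s : Set ℝ}
    (hf : ∀ x ∈ s, DifferentiableAt ℝ f x) : volume (f '' {x ∈ s | deriv f x = 0}) = 0 := by
  refine addHaar_image_eq_zero_of_det_fderivWithin_eq_zero volume (f' := fun _ => 0)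
    (fun x hx => ?_) (fun _ _ => by simp [ContinuousLinearMap.det])
  have hfx := (hf x hx.1).hasDerivAt
  rw [hx.2] at hfx
  simpa using hfx.hasFDerivAt.hasFDerivWithinAt

theorem fst_mem_and_abs_snd_eq_of_mem_product_pair {T : Finset ℝ} {η : ℝ} (hη : 0 ≤ η)
    {i : ℝ × ℝ} (hi : i ∈ T ×ˢ ({-η, η} : Finset ℝ)) : i.1 ∈ T ∧ |i.2| = η := by
  obtain ⟨hi1, hi2⟩ := Finset.mem_product.1 hi
  simp only [Finset.mem_insert, Finset.mem_singleton] at hi2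
  rcases hi2 with h | h <;> simp [hi1, h, abs_of_nonneg hη]

theorem pairwiseDisjoint_uIoo_add_of_two_mul_lt_dist {T : Finset ℝ} {η : ℝ} (hη : 0 < η)
    (hT : ∀ x ∈ T, ∀ y ∈ T, x ≠ y → 2 * η < dist x y) :
    ((T ×ˢ {-η, η} : Finset (ℝ × ℝ)) : Set (ℝ × ℝ)).PairwiseDisjoint
      fun i => uIoo i.1 (i.1 + i.2) := by
  intro i hi j hj hij
  refine Set.disjoint_left.2 fun x hxi hxj => hij ?_
  obtain ⟨hiT, hiη⟩ := fst_mem_and_abs_snd_eq_of_mem_product_pair hη.le hi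
  obtain ⟨hjT, hjη⟩ := fst_mem_and_abs_snd_eq_of_mem_product_pair hη.le hj
  obtain ⟨hxi_lt, hxi_pos⟩ := abs_sub_lt_and_pos_mul_of_mem_uIoo hxi
  obtain ⟨hxj_lt, hxj_pos⟩ := abs_sub_lt_and_pos_mul_of_mem_uIoo hxj
  have h1 : i.1 = j.1 := by
    by_contra hne
    have := hT _ hiT _ hjT hne
    rw [Real.dist_eq] at this
    rw [hiη] at hxi_lt
    rw [hjη] at hxj_lt
    linarith [abs_sub_le i.1 x j.1, abs_sub_comm i.1 x]
  have h2 : i.2 = j.2 := by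
    rcases abs_eq_abs.1 (hiη.trans hjη.symm) with h | h
    · exact h
    · rw [h1, h] at hxi_pos
      linarith
  exact Prod.ext h1 h2

theorem exists_Ioo_forall_le_encard_of_pairwiseDisjoint {ι α : Type*}
    {P : Finset ι} {J : ι → Set α} (hJ : (P : Set ι).PairwiseDisjoint J) {g : ι → ℝ}
    (hg : ∀ i ∈ P, g i ≠ 0) {A : ℝ → Set α}
    (hA : ∀ i ∈ P, ∀ v ∈ uIoo 0 (g i), (J i ∩ A v).Nonempty) {n : ℕ} (hn : 2 * n ≤ P.card)
    {ε : ℝ} (hε : 0 < ε) :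
    ∃ a b, a < b ∧ Ioo a b ⊆ Ioo (-ε) ε ∧ ∀ v ∈ Ioo a b, (n : ℕ∞) ≤ (A v).encard := by
  obtain ⟨δ, hδ, hδε, hδP⟩ : ∃ δ > 0, δ ≤ ε ∧ ∀ i ∈ P, δ < |g i| := by
    have hsmall : ∀ᶠ δ in 𝓝[>] (0 : ℝ), 0 < δ ∧ δ ≤ ε ∧ ∀ i ∈ P, δ < |g i| := by
      simp only [eventually_and, eventually_all_finset]
      exact ⟨self_mem_nhdsWithin, mem_of_superset (Ioo_mem_nhdsGT hε) fun δ h => h.2.le,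
        fun i hi => mem_of_superset (Ioo_mem_nhdsGT (abs_pos.2 (hg i hi))) fun δ h => h.2⟩
    exact hsmall.exists
  have hcount (Q : Finset ι) (hQ : Q ⊆ P) (hnQ : n ≤ Q.card) (v : ℝ)
      (hv : ∀ i ∈ Q, v ∈ uIoo 0 (g i)) : (n : ℕ∞) ≤ (A v).encard :=
    (Nat.cast_le.2 hnQ).trans <| Finset.card_le_encard_of_pairwiseDisjoint (hJ.subset hQ)
      fun i hi => hA i (hQ hi) v (hv i hi)
  -- one of the two signs is taken by `g` at least `n` times
  have hsplit := Finset.card_filter_add_card_filter_not (s := P) fun i => 0 < g i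
  by_cases hpos : n ≤ (P.filter fun i => 0 < g i).card
  · refine ⟨0, δ, hδ, Ioo_subset_Ioo (by linarith) hδε, fun v hv =>
      hcount _ (Finset.filter_subset _ _) hpos v fun i hi => ?_⟩
    obtain ⟨hiP, hi⟩ := Finset.mem_filter.1 hi
    exact mem_uIoo_of_lt hv.1 (hv.2.trans (abs_of_pos hi ▸ hδP i hiP))
  · refine ⟨-δ, 0, by linarith, Ioo_subset_Ioo (by linarith) hε.le, fun v hv =>
      hcount (P.filter fun i => ¬0 < g i) (Finset.filter_subset _ _) (by omega) v
        fun i hi => ?_⟩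
    obtain ⟨hiP, hi⟩ := Finset.mem_filter.1 hi
    have hδi := hδP i hiP
    rw [abs_of_neg (lt_of_le_of_ne (not_lt.1 hi) (hg i hiP))] at hδi
    exact mem_uIoo_of_gt (by linarith [hv.1]) hv.2

theorem exists_Ioo_encard_zeros_le_encard_level {f : ℝ → ℝ} {U : Set ℝ} (hU : IsOpen U)
    (hf : ContinuousOn f U) (hZ : {x ∈ U | f x = 0}.Finite) {ε : ℝ} (hε : 0 < ε) :
    ∃ a b, a < b ∧ Ioo a b ⊆ Ioo (-ε) ε ∧
      ∀ v ∈ Ioo a b, {x ∈ U | f x = 0}.encard ≤ {x ∈ U | f x = v}.encard := by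
  set T := hZ.toFinset
  have hT (x : ℝ) : x ∈ T ↔ x ∈ U ∧ f x = 0 := hZ.mem_toFinset
  obtain ⟨η, hη, hηT⟩ : ∃ η > 0, ∀ x ∈ T, closedBall x η ⊆ U ∧
      ∀ y ∈ T, x ≠ y → 2 * η < dist x y :=
    T.exists_pos_closedBall_subset_and_two_mul_lt_dist hU fun x hx => ((hT x).1 hx).1
  -- `i = (ζ, ±η)` encodes the test point `ζ ± η` next to the zero `ζ`
  set P := T ×ˢ ({-η, η} : Finset ℝ)
  have hP {i : ℝ × ℝ} (hi : i ∈ P) : i.1 ∈ T ∧ |i.2| = η :=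
    fst_mem_and_abs_snd_eq_of_mem_product_pair hη.le hi
  have hsegU {i : ℝ × ℝ} (hi : i ∈ P) : uIcc i.1 (i.1 + i.2) ⊆ U := by
    obtain ⟨hiT, hiη⟩ := hP hi
    have hball := (hηT _ hiT).1
    rw [Real.closedBall_eq_Icc] at hball
    refine (uIcc_subset_Icc ⟨?_, ?_⟩ ⟨?_, ?_⟩).trans hball <;>
      linarith [neg_abs_le i.2, le_abs_self i.2]
  have hfP (i : ℝ × ℝ) (hi : i ∈ P) : f (i.1 + i.2) ≠ 0 := by
    intro hzero
    obtain ⟨hiT, hiη⟩ := hP hi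
    have hne : i.1 ≠ i.1 + i.2 := fun h => by
      rw [left_eq_add.1 h, abs_zero] at hiη
      linarith
    have := (hηT _ hiT).2 _ ((hT _).2 ⟨hsegU hi right_mem_uIcc, hzero⟩) hne
    rw [Real.dist_eq, sub_add_cancel_left, abs_neg, hiη] at this
    linarith
  have hlevel (i : ℝ × ℝ) (hi : i ∈ P) (v : ℝ) (hv : v ∈ uIoo 0 (f (i.1 + i.2))) :
      (uIoo i.1 (i.1 + i.2) ∩ {x ∈ U | f x = v}).Nonempty := by
    rw [← ((hT _).1 (hP hi).1).2] at hv
    obtain ⟨x, hx, rfl⟩ := intermediate_value_uIoo (hf.mono (hsegU hi)) hv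
    exact ⟨x, hx, hsegU hi (uIoo_subset_uIcc_self hx), rfl⟩
  have hPcard : 2 * T.card ≤ P.card := by
    rw [Finset.card_product, Finset.card_pair (by linarith), mul_comm]
  rw [hZ.encard_eq_coe_toFinset_card]
  exact exists_Ioo_forall_le_encard_of_pairwiseDisjoint
    (pairwiseDisjoint_uIoo_add_of_two_mul_lt_dist hη fun x hx => (hηT x hx).2)
    hfP hlevel hPcard hε

theorem exists_regular_value_encard_zeros_le_encard_level {f : ℝ → ℝ} {U : Set ℝ}
    (hU : IsOpen U) (hf : DifferentiableOn ℝ f U) (hZ : {x ∈ U | f x = 0}.Finite) {ε : ℝ}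
    (hε : 0 < ε) :
    ∃ v ∈ Ioo (-ε) ε, {x ∈ U | f x = 0}.encard ≤ {x ∈ U | f x = v}.encard ∧
      ∀ x ∈ U, f x = v → deriv f x ≠ 0 := by
  obtain ⟨a, b, hab, habε, hlevel⟩ :=
    exists_Ioo_encard_zeros_le_encard_level hU hf.continuousOn hZ hε
  have hcrit : volume (f '' {x ∈ U | deriv f x = 0}) = 0 :=
    volume_image_setOf_deriv_eq_zero fun x hx => hf.differentiableAt (hU.mem_nhds hx)
  obtain ⟨v, hv, hvcrit⟩ : (Ioo a b \ f '' {x ∈ U | deriv f x = 0}).Nonempty := by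
    refine nonempty_of_measure_ne_zero (μ := volume) ?_
    rw [measure_sdiff_null hcrit, Real.volume_Ioo]
    simpa using hab
  exact ⟨v, habε hv, hlevel v hv, fun x hx hfx hderiv => hvcrit ⟨x, ⟨hx, hderiv⟩, hfx⟩⟩

theorem differentiableOn_one_add_sum_mul_rpow_mul_one_sub_rpow {ι : Type*} [Fintype ι]
    (c : ι → ℝ) (e : ι → ℝ × ℝ) :
    DifferentiableOn ℝ (fun t : ℝ => 1 + ∑ i, c i * t ^ (e i).1 * (1 - t) ^ (e i).2)
      (Ioo 0 1) := by
  intro t ht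
  refine (DifferentiableAt.const_add _
    (DifferentiableAt.fun_sum fun i _ => ?_)).differentiableWithinAt
  exact ((differentiableAt_id.rpow_const (Or.inl ht.1.ne')).const_mul _).mul
    ((differentiableAt_id.const_sub 1).rpow_const (Or.inl (sub_pos.2 ht.2).ne'))

theorem one_add_sum_div_one_sub_mul_rpow_mul_one_sub_rpow {ι : Type*} [Fintype ι]
    (c : ι → ℝ) (e : ι → ℝ × ℝ) {v : ℝ} (hv : 1 - v ≠ 0) :
    (fun t : ℝ => 1 + ∑ i, c i / (1 - v) * t ^ (e i).1 * (1 - t) ^ (e i).2) =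
      fun t => (1 + ∑ i, c i * t ^ (e i).1 * (1 - t) ^ (e i).2 - v) / (1 - v) := by
  ext t
  have hsum : ∑ i, c i / (1 - v) * t ^ (e i).1 * (1 - t) ^ (e i).2 =
      (∑ i, c i * t ^ (e i).1 * (1 - t) ^ (e i).2) / (1 - v) := by
    rw [Finset.sum_div]
    exact Finset.sum_congr rfl fun i _ => by ring
  rw [hsum]
  field_simp
  ring

theorem perturb_to_nondegenerate_roots_general
    (k : ℕ) (c : Fin k → ℝ) (e : Fin k → ℝ × ℝ) (r : ℕ)
    (hr : {t : ℝ | t ∈ Set.Ioo (0 : ℝ) 1 ∧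
        1 + ∑ i, c i * t ^ (e i).1 * (1 - t) ^ (e i).2 = 0}.encard = r) :
    ∃ c' : Fin k → ℝ,
      (r : ℕ∞) ≤ {t : ℝ | t ∈ Set.Ioo (0 : ℝ) 1 ∧
          1 + ∑ i, c' i * t ^ (e i).1 * (1 - t) ^ (e i).2 = 0}.encard ∧
      ∀ t ∈ Set.Ioo (0 : ℝ) 1,
        1 + ∑ i, c' i * t ^ (e i).1 * (1 - t) ^ (e i).2 = 0 →
        deriv (fun s : ℝ => 1 + ∑ i, c' i * s ^ (e i).1 * (1 - s) ^ (e i).2) t ≠ 0 := by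
  obtain ⟨v, hv, hlevel, hregular⟩ :=
    exists_regular_value_encard_zeros_le_encard_level isOpen_Ioo
      (differentiableOn_one_add_sum_mul_rpow_mul_one_sub_rpow c e)
      (finite_of_encard_eq_coe hr) one_pos
  have hv1 : 1 - v ≠ 0 := (sub_pos.2 hv.2).ne'
  have hrescale := one_add_sum_div_one_sub_mul_rpow_mul_one_sub_rpow c e hv1
  have hroot (t : ℝ) :
      1 + ∑ i, c i / (1 - v) * t ^ (e i).1 * (1 - t) ^ (e i).2 = 0 ↔
        1 + ∑ i, c i * t ^ (e i).1 * (1 - t) ^ (e i).2 = v := by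
    rw [congrFun hrescale t, div_eq_zero_iff, sub_eq_zero, or_iff_left hv1]
  refine ⟨fun i => c i / (1 - v), ?_, fun t ht ht0 => ?_⟩
  · simpa only [hroot, ← hr] using hlevel
  · rw [hrescale, deriv_div_const, deriv_sub_const]
    exact div_ne_zero (hregular t ht ((hroot t).1 ht0)) hv1

/-- If `f(t) = 1 + ∑ i, c i * t ^ (a i) * (1−t) ^ (b i)` (pairwise distinct exponent
pairs, none `(0,0)`, `k ≥ 2`) has exactly `r` roots in `(0,1)`, then the coefficients
can be perturbed so that the new function has at least `r` roots in `(0,1)`, none of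
which is degenerate (a root `ζ` is degenerate if the function and its derivative both
vanish at `ζ`). -/
theorem perturb_to_nondegenerate_roots
    (k : ℕ) (hk : 2 ≤ k) (c : Fin k → ℝ) (e : Fin k → ℝ × ℝ)
    (he : Function.Injective e) (he0 : ∀ i, e i ≠ (0, 0)) (r : ℕ)
    (hr : {t : ℝ | t ∈ Set.Ioo (0 : ℝ) 1 ∧
        1 + ∑ i, c i * t ^ (e i).1 * (1 - t) ^ (e i).2 = 0}.encard = r) :
    ∃ c' : Fin k → ℝ,
      (r : ℕ∞) ≤ {t : ℝ | t ∈ Set.Ioo (0 : ℝ) 1 ∧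
          1 + ∑ i, c' i * t ^ (e i).1 * (1 - t) ^ (e i).2 = 0}.encard ∧
      ∀ t ∈ Set.Ioo (0 : ℝ) 1,
        1 + ∑ i, c' i * t ^ (e i).1 * (1 - t) ^ (e i).2 = 0 →
        deriv (fun s : ℝ => 1 + ∑ i, c' i * s ^ (e i).1 * (1 - s) ^ (e i).2) t ≠ 0 :=
  perturb_to_nondegenerate_roots_general k c e r hr
end

section
/- Let A,B > 0 and a,b,c,d ∈ ℝ with a > 0, b > 0, c < 0, and d < 0. If f(t) := 1 − A t^a(1−t)^b − B t^c(1−t)^d has no degenerate roots in (0,1), then f has fewer than 6 roots in the open interval (0,1). -/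
open Real Set

/-!
With `p = a - c` and `q = b - d` one has `f' t = -t^(c-1) (1-t)^(d-1) h t`, where
`h t = A t^p (1-t)^q (a(1-t) - bt) + B (c(1-t) - dt)`, then
`h' t = A t^(p-1) (1-t)^(q-1) R t - B (c+d)` and `h'' t = A t^(p-2) (1-t)^(q-2) S t` for a convex
quadratic `R` and a cubic `S` with negative leading coefficient. Six roots of `f` would give, by
Rolle's theorem, five zeros of `h`, four of `h'` (at each of which `R < 0`, as `B (c+d) < 0`) and
three zeros `s₁ < s₂ < s₃` of `S`. By convexity `R s₁ < 0`; since `R 0 = p a > 0`, `R` has a zero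
`x < s₁` at which `R' x < 0`, so `S x = x (1-x) R' x < 0`. But a cubic with negative leading
coefficient is positive to the left of its three roots.
-/

theorem exists_strictMono_fin_of_le_encard {α : Type*} [LinearOrder α] {s : Set α} {n : ℕ}
    (h : n ≤ s.encard) : ∃ T : Fin n → α, StrictMono T ∧ ∀ i, T i ∈ s := by
  obtain ⟨t, hts, htn⟩ := exists_subset_encard_eq h
  have ht : t.Finite := finite_of_encard_eq_coe htn
  have hcard : ht.toFinset.card = n := by
    rw [ht.encard_eq_coe_toFinset_card] at htn
    exact_mod_cast htn
  exact ⟨ht.toFinset.orderEmbOfFin hcard, (ht.toFinset.orderEmbOfFin hcard).strictMono,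
    fun i => hts (ht.mem_toFinset.1 (ht.toFinset.orderEmbOfFin_mem hcard i))⟩

theorem exists_interlacing_zeros_of_hasDerivAt {s : Set ℝ} (hs : s.OrdConnected) {φ ψ : ℝ → ℝ}
    (hφ : ∀ x ∈ s, HasDerivAt φ (ψ x) x) {n : ℕ} {T : Fin (n + 1) → ℝ} (hT : StrictMono T)
    (hTs : ∀ i, T i ∈ s) (hT0 : ∀ i, φ (T i) = 0) :
    ∃ U : Fin n → ℝ, StrictMono U ∧ (∀ i, U i ∈ Ioo (T i.castSucc) (T i.succ)) ∧
      (∀ i, U i ∈ s) ∧ ∀ i, ψ (U i) = 0 := by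
  have hsub (i : Fin n) : Icc (T i.castSucc) (T i.succ) ⊆ s := hs.out (hTs _) (hTs _)
  have rolle (i : Fin n) : ∃ u ∈ Ioo (T i.castSucc) (T i.succ), ψ u = 0 :=
    exists_hasDerivAt_eq_zero (hT i.castSucc_lt_succ)
      (fun x hx => (hφ x (hsub i hx)).continuousAt.continuousWithinAt) ((hT0 _).trans (hT0 _).symm)
      (fun x hx => hφ x (hsub i (Ioo_subset_Icc_self hx)))
  choose U hU hψ using rolle
  refine ⟨U, fun i j hij => ?_, hU, fun i => hsub i (Ioo_subset_Icc_self (hU i)), hψ⟩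
  calc U i < T i.succ := (hU i).2
    _ ≤ T j.castSucc := hT.monotone (Fin.succ_le_castSucc_iff.2 hij)
    _ < U j := (hU j).1

theorem rpow_mul_one_sub_rpow_pos {t : ℝ} (ht : t ∈ Ioo 0 1) (p q : ℝ) :
    0 < t ^ p * (1 - t) ^ q :=
  mul_pos (rpow_pos_of_pos ht.1 p) (rpow_pos_of_pos (sub_pos.2 ht.2) q)

theorem hasDerivAt_rpow_mul_one_sub_rpow_mul {p q t P' : ℝ} {P : ℝ → ℝ} (ht : t ∈ Ioo 0 1)
    (hP : HasDerivAt P P' t) :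
    HasDerivAt (fun s => s ^ p * (1 - s) ^ q * P s)
      (t ^ (p - 1) * (1 - t) ^ (q - 1) * ((p * (1 - t) - q * t) * P t + t * (1 - t) * P')) t := by
  have ht₁ : 1 - t ≠ 0 := (sub_pos.2 ht.2).ne'
  have hp : HasDerivAt (fun s => s ^ p) (p * t ^ (p - 1)) t :=
    hasDerivAt_rpow_const (Or.inl ht.1.ne')
  have hq : HasDerivAt (fun s => (1 - s) ^ q) (-1 * q * (1 - t) ^ (q - 1)) t :=
    (hasDerivAt_id' t).const_sub 1 |>.rpow_const (Or.inl ht₁)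
  refine ((hp.mul hq).mul hP).congr_deriv ?_
  have e₁ : t ^ p = t ^ (p - 1) * t := by rw [← rpow_add_one ht.1.ne', sub_add_cancel]
  have e₂ : (1 - t) ^ q = (1 - t) ^ (q - 1) * (1 - t) := by rw [← rpow_add_one ht₁, sub_add_cancel]
  simp only [Pi.mul_apply]
  rw [e₁, e₂]
  ring

theorem hasDerivAt_mul_one_sub_sub_mul (u v t : ℝ) :
    HasDerivAt (fun s => u * (1 - s) - v * s) (-(u + v)) t :=
  (((hasDerivAt_id' t).const_sub 1).const_mul u |>.sub ((hasDerivAt_id' t).const_mul v)).congr_deriv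
    (by ring)

theorem cubic_eq_mul_prod_sub_of_roots {α β γ δ s₁ s₂ s₃ : ℝ} (h₁₂ : s₁ ≠ s₂) (h₁₃ : s₁ ≠ s₃)
    (h₂₃ : s₂ ≠ s₃) (e₁ : α * s₁ ^ 3 + β * s₁ ^ 2 + γ * s₁ + δ = 0)
    (e₂ : α * s₂ ^ 3 + β * s₂ ^ 2 + γ * s₂ + δ = 0) (e₃ : α * s₃ ^ 3 + β * s₃ ^ 2 + γ * s₃ + δ = 0)
    (x : ℝ) : α * x ^ 3 + β * x ^ 2 + γ * x + δ = α * ((x - s₁) * (x - s₂) * (x - s₃)) := by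
  have e₁₂ : α * (s₁ ^ 2 + s₁ * s₂ + s₂ ^ 2) + β * (s₁ + s₂) + γ = 0 :=
    (mul_eq_zero.1 (by linear_combination e₁ - e₂ :
      (s₁ - s₂) * (α * (s₁ ^ 2 + s₁ * s₂ + s₂ ^ 2) + β * (s₁ + s₂) + γ) = 0)).resolve_left
      (sub_ne_zero.2 h₁₂)
  have e₂₃ : α * (s₂ ^ 2 + s₂ * s₃ + s₃ ^ 2) + β * (s₂ + s₃) + γ = 0 :=
    (mul_eq_zero.1 (by linear_combination e₂ - e₃ :
      (s₂ - s₃) * (α * (s₂ ^ 2 + s₂ * s₃ + s₃ ^ 2) + β * (s₂ + s₃) + γ) = 0)).resolve_left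
      (sub_ne_zero.2 h₂₃)
  have hβ : β + α * (s₁ + s₂ + s₃) = 0 :=
    (mul_eq_zero.1 (by linear_combination e₁₂ - e₂₃ :
      (s₁ - s₃) * (β + α * (s₁ + s₂ + s₃)) = 0)).resolve_left (sub_ne_zero.2 h₁₃)
  have hγ : γ = α * (s₁ * s₂ + s₁ * s₃ + s₂ * s₃) := by linear_combination e₁₂ - (s₁ + s₂) * hβ
  have hδ : δ = -α * (s₁ * s₂ * s₃) := by linear_combination e₁ - s₁ ^ 2 * hβ - s₁ * hγ
  linear_combination x ^ 2 * hβ + x * hγ + hδ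

theorem cubic_pos_of_lt_three_roots {P : ℝ → ℝ} {α β γ δ : ℝ}
    (hP : ∀ t, P t = α * t ^ 3 + β * t ^ 2 + γ * t + δ) (hα : α < 0) {s₁ s₂ s₃ x : ℝ}
    (h₁₂ : s₁ < s₂) (h₂₃ : s₂ < s₃) (e₁ : P s₁ = 0) (e₂ : P s₂ = 0) (e₃ : P s₃ = 0)
    (hx : x < s₁) : 0 < P x := by
  rw [hP] at e₁ e₂ e₃ ⊢
  rw [cubic_eq_mul_prod_sub_of_roots h₁₂.ne (h₁₂.trans h₂₃).ne h₂₃.ne e₁ e₂ e₃]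
  refine mul_pos_of_neg_of_neg hα (mul_neg_of_pos_of_neg (mul_pos_of_neg_of_neg ?_ ?_) ?_) <;>
    linarith

section Quadratic

variable {Q : ℝ → ℝ} {r₂ r₁ r₀ : ℝ} (hQ : ∀ t, Q t = r₂ * t ^ 2 + r₁ * t + r₀) (hr₂ : 0 ≤ r₂)
include hQ hr₂

theorem quadratic_neg_of_mem_Ioo {u s v : ℝ} (hu : Q u < 0) (hv : Q v < 0) (hs : s ∈ Ioo u v) :
    Q s < 0 := by
  have key : (v - u) * Q s = (v - s) * Q u + (s - u) * Q v - r₂ * (s - u) * (v - s) * (v - u) := by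
    simp only [hQ]; ring
  obtain ⟨hus, hsv⟩ := hs
  have : (v - u) * Q s < 0 := by
    rw [key]
    nlinarith [mul_nonneg (mul_nonneg (mul_nonneg hr₂ (sub_pos.2 hus).le) (sub_pos.2 hsv).le)
      (sub_pos.2 (hus.trans hsv)).le, mul_neg_of_pos_of_neg (sub_pos.2 hsv) hu,
      mul_neg_of_pos_of_neg (sub_pos.2 hus) hv]
  exact neg_of_mul_neg_right this (sub_pos.2 (hus.trans hsv)).le

theorem quadratic_slope_neg_of_eq_zero_of_neg {x y : ℝ} (hxy : x < y) (hx : Q x = 0)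
    (hy : Q y < 0) : 2 * r₂ * x + r₁ < 0 := by
  have key : Q y = Q x + (2 * r₂ * x + r₁) * (y - x) + r₂ * (y - x) ^ 2 := by
    simp only [hQ]; ring
  have : (2 * r₂ * x + r₁) * (y - x) < 0 := by nlinarith [mul_nonneg hr₂ (sq_nonneg (y - x))]
  exact neg_of_mul_neg_left this (sub_pos.2 hxy).le

end Quadratic

namespace CaseC

section

variable (a b p q : ℝ)

def r₂ : ℝ := (a + b) * (p + q + 1)

def r₁ : ℝ := -((a + b) * (p + 1) + a * (p + q))

def R (t : ℝ) : ℝ := (p * (1 - t) - q * t) * (a * (1 - t) - b * t) - (a + b) * t * (1 - t)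

def R' (t : ℝ) : ℝ := 2 * r₂ a b p q * t + r₁ a b p q

def S (t : ℝ) : ℝ := ((p - 1) * (1 - t) - (q - 1) * t) * R a b p q t + t * (1 - t) * R' a b p q t

theorem R_eq (t : ℝ) : R a b p q t = r₂ a b p q * t ^ 2 + r₁ a b p q * t + p * a := by
  simp only [R, r₂, r₁]
  ring

theorem hasDerivAt_R (t : ℝ) : HasDerivAt (R a b p q) (R' a b p q t) t := by
  rw [show R a b p q = fun t => r₂ a b p q * t ^ 2 + r₁ a b p q * t + p * a from
    funext (R_eq a b p q)]
  refine ((((hasDerivAt_pow 2 t).const_mul _).add ((hasDerivAt_id' t).const_mul _)).add_const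
    _).congr_deriv ?_
  simp only [R']
  ring

theorem S_eq :
    ∃ β γ δ : ℝ, ∀ t, S a b p q t = -((p + q) * r₂ a b p q) * t ^ 3 + β * t ^ 2 + γ * t + δ :=
  ⟨(p + 1) * r₂ a b p q - (p + q - 1) * r₁ a b p q, p * r₁ a b p q - (p + q - 2) * (p * a),
    (p - 1) * (p * a), fun t => by simp only [S, R_eq, R']; ring⟩

theorem R_nonneg_of_three_zeros_S (ha : 0 < a) (hb : 0 < b) (hp : 0 < p) (hq : 0 < q)
    {s₁ s₂ s₃ : ℝ} (hs₁ : s₁ ∈ Ioo 0 1) (h₁₂ : s₁ < s₂) (h₂₃ : s₂ < s₃) (e₁ : S a b p q s₁ = 0)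
    (e₂ : S a b p q s₂ = 0) (e₃ : S a b p q s₃ = 0) : 0 ≤ R a b p q s₁ := by
  by_contra! hR
  have hr₂ : 0 < r₂ a b p q := by unfold r₂; positivity
  obtain ⟨x, ⟨hx₀, hxs₁⟩, hRx⟩ : ∃ x ∈ Ioo 0 s₁, R a b p q x = 0 :=
    intermediate_value_Ioo' hs₁.1.le
      (continuous_iff_continuousAt.2 fun t => (hasDerivAt_R a b p q t).continuousAt).continuousOn
      ⟨hR, by rw [R_eq]; simpa using mul_pos hp ha⟩
  have hR'x : R' a b p q x < 0 :=
    quadratic_slope_neg_of_eq_zero_of_neg (R_eq a b p q) hr₂.le hxs₁ hRx hR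
  have hSx : S a b p q x < 0 := by
    rw [S, hRx, mul_zero, zero_add]
    exact mul_neg_of_pos_of_neg (mul_pos hx₀ (by linarith [hs₁.2])) hR'x
  obtain ⟨β, γ, δ, hS⟩ := S_eq a b p q
  have hα : -((p + q) * r₂ a b p q) < 0 := neg_neg_of_pos (by positivity)
  exact hSx.not_gt (cubic_pos_of_lt_three_roots hS hα h₁₂ h₂₃ e₁ e₂ e₃ hxs₁)

end

variable (A B a b c d : ℝ)

noncomputable def h (t : ℝ) : ℝ :=
  A * (t ^ (a - c) * (1 - t) ^ (b - d) * (a * (1 - t) - b * t)) + B * (c * (1 - t) - d * t)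

noncomputable def h' (t : ℝ) : ℝ :=
  A * (t ^ (a - c - 1) * (1 - t) ^ (b - d - 1) * R a b (a - c) (b - d) t) - B * (c + d)

variable {A B a b c d}

theorem hasDerivAt_f {t : ℝ} (ht : t ∈ Ioo 0 1) :
    HasDerivAt (fun t => 1 - A * t ^ a * (1 - t) ^ b - B * t ^ c * (1 - t) ^ d)
      (-(t ^ (c - 1) * (1 - t) ^ (d - 1)) * h A B a b c d t) t := by
  have hab := hasDerivAt_rpow_mul_one_sub_rpow_mul (p := a) (q := b) ht (hasDerivAt_const t 1)
  have hcd := hasDerivAt_rpow_mul_one_sub_rpow_mul (p := c) (q := d) ht (hasDerivAt_const t 1)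
  have hf : (fun t => 1 - A * t ^ a * (1 - t) ^ b - B * t ^ c * (1 - t) ^ d) =
      fun t => 1 - A * (t ^ a * (1 - t) ^ b * 1) - B * (t ^ c * (1 - t) ^ d * 1) := by
    ext s
    ring
  rw [hf]
  refine (((hab.const_mul A).const_sub 1).sub (hcd.const_mul B)).congr_deriv ?_
  rw [show t ^ (a - 1) = t ^ (c - 1) * t ^ (a - c) by rw [← rpow_add ht.1]; ring_nf,
    show (1 - t) ^ (b - 1) = (1 - t) ^ (d - 1) * (1 - t) ^ (b - d) by
      rw [← rpow_add (sub_pos.2 ht.2)]; ring_nf]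
  unfold h
  ring

theorem hasDerivAt_h {t : ℝ} (ht : t ∈ Ioo 0 1) :
    HasDerivAt (h A B a b c d) (h' A B a b c d t) t := by
  have hg := hasDerivAt_rpow_mul_one_sub_rpow_mul (p := a - c) (q := b - d) ht
    (hasDerivAt_mul_one_sub_sub_mul a b t)
  refine ((hg.const_mul A).add ((hasDerivAt_mul_one_sub_sub_mul c d t).const_mul B)).congr_deriv ?_
  simp only [h', R]
  ring

theorem hasDerivAt_h' {t : ℝ} (ht : t ∈ Ioo 0 1) :
    HasDerivAt (h' A B a b c d)
      (A * (t ^ (a - c - 1 - 1) * (1 - t) ^ (b - d - 1 - 1) * S a b (a - c) (b - d) t)) t :=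
  ((hasDerivAt_rpow_mul_one_sub_rpow_mul ht (hasDerivAt_R _ _ _ _ t)).const_mul A).sub_const _

theorem R_neg_of_h'_eq_zero (hA : 0 < A) (hB : 0 < B) (hcd : c + d < 0) {t : ℝ}
    (ht : t ∈ Ioo 0 1) (h0 : h' A B a b c d t = 0) : R a b (a - c) (b - d) t < 0 := by
  have hpos := mul_pos hA (rpow_mul_one_sub_rpow_pos ht (a - c - 1) (b - d - 1))
  refine neg_of_mul_neg_right ?_ hpos.le
  rw [h'] at h0
  nlinarith [mul_neg_of_pos_of_neg hB hcd]

end CaseC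

open CaseC

theorem fewer_than_six_roots_case_C_general
    (a b c d A B : ℝ) (hA : 0 < A) (hB : 0 < B)
    (ha : 0 < a) (hb : 0 < b) (hc : c < 0) (hd : d < 0)
    (f : ℝ → ℝ)
    (hf : f = fun t : ℝ => 1 - A * t ^ a * (1 - t) ^ b - B * t ^ c * (1 - t) ^ d) :
    {t ∈ Set.Ioo (0 : ℝ) 1 | f t = 0}.encard < 6 := by
  by_contra! h6
  obtain ⟨T, hT, hTf⟩ := exists_strictMono_fin_of_le_encard h6
  subst hf
  have hI : (Ioo (0 : ℝ) 1).OrdConnected := ordConnected_Ioo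
  obtain ⟨Z, hZ, -, hZI, hZ0⟩ := exists_interlacing_zeros_of_hasDerivAt hI
    (fun t ht => hasDerivAt_f ht) hT (fun i => (hTf i).1) (fun i => (hTf i).2)
  replace hZ0 i : h A B a b c d (Z i) = 0 := (mul_eq_zero.1 (hZ0 i)).resolve_left
    (neg_ne_zero.2 (rpow_mul_one_sub_rpow_pos (hZI i) _ _).ne')
  obtain ⟨W, hW, -, hWI, hW0⟩ := exists_interlacing_zeros_of_hasDerivAt hI
    (fun t ht => hasDerivAt_h ht) hZ hZI hZ0
  obtain ⟨V, hV, hVW, hVI, hV0⟩ := exists_interlacing_zeros_of_hasDerivAt hI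
    (fun t ht => hasDerivAt_h' ht) hW hWI hW0
  replace hV0 i : S a b (a - c) (b - d) (V i) = 0 := by
    simpa [hA.ne', (rpow_mul_one_sub_rpow_pos (hVI i) _ _).ne'] using hV0 i
  have hRW i := R_neg_of_h'_eq_zero hA hB (by linarith) (hWI i) (hW0 i)
  have hr₂ : 0 < r₂ a b (a - c) (b - d) := mul_pos (by linarith) (by linarith)
  have hRV := quadratic_neg_of_mem_Ioo (R_eq a b _ _) hr₂.le (hRW 0) (hRW 1) (hVW 0)
  exact hRV.not_ge (R_nonneg_of_three_zeros_S a b _ _ ha hb (by linarith) (by linarith) (hVI 0)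
    (hV (by decide : (0 : Fin 3) < 1)) (hV (by decide : (1 : Fin 3) < 2)) (hV0 0) (hV0 1) (hV0 2))

/-- Case C: `a, b > 0` and `c, d < 0`.
If `f(t) = 1 − A t^a (1−t)^b − B t^c (1−t)^d` has no degenerate roots in `(0,1)`
(a root `ζ` is degenerate if `f ζ = 0` and `f' ζ = 0`), then `f` has fewer than 6
roots in `(0,1)`.  (`^` is `Real.rpow`.) -/
theorem fewer_than_six_roots_case_C
    (a b c d A B : ℝ) (hA : 0 < A) (hB : 0 < B)
    (ha : 0 < a) (hb : 0 < b) (hc : c < 0) (hd : d < 0)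
    (f : ℝ → ℝ)
    (hf : f = fun t : ℝ => 1 - A * t ^ a * (1 - t) ^ b - B * t ^ c * (1 - t) ^ d)
    (hnd : ∀ t ∈ Set.Ioo (0 : ℝ) 1, f t = 0 → deriv f t ≠ 0) :
    {t ∈ Set.Ioo (0 : ℝ) 1 | f t = 0}.encard < 6 :=
  fewer_than_six_roots_case_C_general a b c d A B hA hB ha hb hc hd f hf
end

section
/- Let A,B > 0 and a,b,c,d ∈ ℝ with a > 0 and b,c,d all negative. If f(t) := 1 − A t^a(1−t)^b − B t^c(1−t)^d has no degenerate roots in (0,1), then f has fewer than 6 roots in the open interval (0,1). -/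
/-!
At a critical point of `f` the two terms of `f'`, namely `A t^(a-1) (1-t)^(b-1) (a - (a+b) t)` and
`B t^(c-1) (1-t)^(d-1) ((c+d) t - c)`, are equal; the first is positive on `(0,1)`, so
`(c+d) t - c > 0` there and the logarithm `ψ` of their ratio vanishes. The derivative of `ψ` is a
rational function whose numerator is a nonzero cubic. By Rolle's theorem six zeros of `f` would give
five zeros of `f'`, hence five zeros of `ψ` on an interval where `ψ` is smooth, hence four roots of
the cubic.
-/

open Real Set Polynomial

theorem exists_strictMono_of_le_encard {α : Type*} [LinearOrder α] {s : Set α} {n : ℕ}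
    (h : (n : ℕ∞) ≤ s.encard) : ∃ x : Fin n → α, StrictMono x ∧ ∀ i, x i ∈ s := by
  obtain ⟨t, hts, ht⟩ := exists_subset_encard_eq h
  have hfin : t.Finite := finite_of_encard_eq_coe ht
  have hcard : hfin.toFinset.card = n := by
    rw [← Nat.cast_inj (R := ℕ∞), ← hfin.encard_eq_coe_toFinset_card, ht]
  exact ⟨fun i => hfin.toFinset.orderEmbOfFin hcard i,
    (hfin.toFinset.orderEmbOfFin hcard).strictMono,
    fun i => hts (hfin.mem_toFinset.mp (Finset.orderEmbOfFin_mem _ hcard i))⟩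

theorem exists_strictMono_deriv_eq_zero {f f' : ℝ → ℝ} {s : Set ℝ} (hs : s.OrdConnected)
    (hf : ∀ t ∈ s, HasDerivAt f (f' t) t) {n : ℕ} {x : Fin (n + 1) → ℝ} (hx : StrictMono x)
    (hxs : ∀ i, x i ∈ s) (hfx : ∀ i, f (x i) = 0) :
    ∃ y : Fin n → ℝ, StrictMono y ∧ ∀ i, y i ∈ s ∧ f' (y i) = 0 := by
  have hsub (i : Fin n) : Icc (x i.castSucc) (x i.succ) ⊆ s := hs.out (hxs _) (hxs _)
  have hrolle (i : Fin n) : ∃ y ∈ Ioo (x i.castSucc) (x i.succ), f' y = 0 :=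
    exists_hasDerivAt_eq_zero (hx i.castSucc_lt_succ)
      (fun t ht => (hf t (hsub i ht)).continuousAt.continuousWithinAt)
      ((hfx _).trans (hfx _).symm) (fun t ht => hf t (hsub i (Ioo_subset_Icc_self ht)))
  choose y hy hy' using hrolle
  refine ⟨y, fun i j hij => ?_, fun i => ⟨hsub i (Ioo_subset_Icc_self (hy i)), hy' i⟩⟩
  calc y i < x i.succ := (hy i).2
    _ ≤ x j.castSucc := hx.monotone (Fin.succ_le_castSucc_iff.2 hij)
    _ < y j := (hy j).1

theorem encard_setOf_eq_zero_le_encard_deriv_add_one {f f' : ℝ → ℝ} {s : Set ℝ}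
    (hs : s.OrdConnected) (hf : ∀ t ∈ s, HasDerivAt f (f' t) t) :
    {t ∈ s | f t = 0}.encard ≤ {t ∈ s | f' t = 0}.encard + 1 := by
  have key (n : ℕ) (hn : ((n + 1 : ℕ) : ℕ∞) ≤ {t ∈ s | f t = 0}.encard) :
      (n : ℕ∞) ≤ {t ∈ s | f' t = 0}.encard := by
    obtain ⟨x, hx, hxs⟩ := exists_strictMono_of_le_encard hn
    obtain ⟨y, hy, hys⟩ :=
      exists_strictMono_deriv_eq_zero hs hf hx (fun i => (hxs i).1) (fun i => (hxs i).2)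
    calc (n : ℕ∞) = ENat.card (Fin n) := by simp
      _ ≤ (range y).encard := hy.injective.encard_range
      _ ≤ _ := encard_le_encard (range_subset_iff.2 hys)
  cases hm : {t ∈ s | f' t = 0}.encard with
  | top => simp
  | coe m =>
    by_contra! hlt
    have h := key (m + 1) (by simpa using Order.add_one_le_of_lt hlt)
    rw [hm] at h
    norm_cast at h
    omega

theorem Polynomial.encard_setOf_isRoot_le {R : Type*} [CommRing R] [IsDomain R] {p : R[X]}
    (hp : p ≠ 0) : {x | p.IsRoot x}.encard ≤ p.natDegree := by
  classical
  have hroots : {x | p.IsRoot x} = ↑p.roots.toFinset := by ext; simp [hp]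
  rw [hroots, encard_coe_eq_coe_finsetCard]
  exact_mod_cast p.roots.toFinset_card_le.trans p.card_roots'

theorem hasDerivAt_rpow_mul_one_sub_rpow (e g : ℝ) {t : ℝ} (ht0 : t ≠ 0) (ht1 : 1 - t ≠ 0) :
    HasDerivAt (fun t : ℝ => t ^ e * (1 - t) ^ g)
      (t ^ (e - 1) * (1 - t) ^ (g - 1) * (e * (1 - t) - g * t)) t := by
  have hl : HasDerivAt (fun x : ℝ => x ^ e) (e * t ^ (e - 1)) t :=
    hasDerivAt_rpow_const (Or.inl ht0)
  have hr : HasDerivAt (fun x : ℝ => (1 - x) ^ g) (g * (1 - t) ^ (g - 1) * (-1)) t :=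
    (hasDerivAt_rpow_const (Or.inl ht1)).comp t ((hasDerivAt_id t).const_sub 1)
  refine (hl.mul hr).congr_deriv ?_
  have he : t ^ e = t ^ (e - 1) * t := by
    rw [← rpow_add_one ht0, sub_add_cancel]
  have hg : (1 - t) ^ g = (1 - t) ^ (g - 1) * (1 - t) := by
    rw [← rpow_add_one ht1, sub_add_cancel]
  rw [he, hg]; ring

section CaseE

noncomputable def psi (a b c d A B t : ℝ) : ℝ :=
  log A + (a - c) * log t + (b - d) * log (1 - t) + log (a - (a + b) * t)
    - log B - log ((c + d) * t - c)

noncomputable def psiNumerator (a b c d : ℝ) : ℝ[X] :=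
  C (a - c) * (1 - X) * (C a - C (a + b) * X) * (C (c + d) * X - C c)
    - C (b - d) * X * (C a - C (a + b) * X) * (C (c + d) * X - C c)
    - C (a + b) * X * (1 - X) * (C (c + d) * X - C c)
    - C (c + d) * X * (1 - X) * (C a - C (a + b) * X)

variable {a b c d A B : ℝ}

theorem hasDerivAt_one_sub_two_rpow_products {t : ℝ} (ht0 : t ≠ 0) (ht1 : 1 - t ≠ 0) :
    HasDerivAt (fun t : ℝ => 1 - A * t ^ a * (1 - t) ^ b - B * t ^ c * (1 - t) ^ d)
      (B * t ^ (c - 1) * (1 - t) ^ (d - 1) * ((c + d) * t - c)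
        - A * t ^ (a - 1) * (1 - t) ^ (b - 1) * (a - (a + b) * t)) t := by
  have h := ((hasDerivAt_const t (1 : ℝ)).sub
    ((hasDerivAt_rpow_mul_one_sub_rpow a b ht0 ht1).const_mul A)).sub
    ((hasDerivAt_rpow_mul_one_sub_rpow c d ht0 ht1).const_mul B)
  simp only [mul_assoc] at h ⊢
  exact h.congr_deriv (by ring)

theorem natDegree_psiNumerator_le (a b c d : ℝ) : (psiNumerator a b c d).natDegree ≤ 3 := by
  unfold psiNumerator; compute_degree

theorem psiNumerator_ne_zero (ha : a ≠ 0) (hc : c ≠ 0) (hac : a ≠ c) :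
    psiNumerator a b c d ≠ 0 := by
  intro h
  have h0 : (psiNumerator a b c d).eval 0 = -((a - c) * a * c) := by
    simp [psiNumerator]
  rw [h, eval_zero, eq_comm, neg_eq_zero] at h0
  exact mul_ne_zero (mul_ne_zero (sub_ne_zero.2 hac) ha) hc h0

theorem hasDerivAt_psi {t : ℝ} (ht0 : t ≠ 0) (ht1 : 1 - t ≠ 0) (hP : a - (a + b) * t ≠ 0)
    (hQ : (c + d) * t - c ≠ 0) :
    HasDerivAt (psi a b c d A B) ((psiNumerator a b c d).eval t
      / (t * (1 - t) * (a - (a + b) * t) * ((c + d) * t - c))) t := by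
  have hlog1 := ((hasDerivAt_id t).const_sub 1).log ht1
  have hlogP := (((hasDerivAt_id t).const_mul (a + b)).const_sub a).log hP
  have hlogQ := (((hasDerivAt_id t).const_mul (c + d)).sub_const c).log hQ
  have h := (((((hasDerivAt_const t (log A)).add ((hasDerivAt_log ht0).const_mul (a - c))).add
    (hlog1.const_mul (b - d))).add hlogP).sub_const (log B)).sub hlogQ
  refine HasDerivAt.congr_deriv (f := psi a b c d A B) h ?_
  rw [eq_div_iff (by simp [*])]
  simp only [psiNumerator, eval_sub, eval_mul, eval_C, eval_X, eval_one, id]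
  set P := a - (a + b) * t with hP_def
  set Q := (c + d) * t - c with hQ_def
  field_simp
  rw [hP_def, hQ_def]
  ring

theorem psi_eq_zero_of_deriv_eq_zero (hA : 0 < A) (hB : 0 < B) (ha : 0 < a) (hb : b < 0)
    {t : ℝ} (ht0 : 0 < t) (ht1 : t < 1)
    (h : B * t ^ (c - 1) * (1 - t) ^ (d - 1) * ((c + d) * t - c)
        - A * t ^ (a - 1) * (1 - t) ^ (b - 1) * (a - (a + b) * t) = 0) :
    0 < (c + d) * t - c ∧ psi a b c d A B t = 0 := by
  have h1t : 0 < 1 - t := by linarith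
  have hP : 0 < a - (a + b) * t := by nlinarith
  have hAterm : 0 < A * t ^ (a - 1) * (1 - t) ^ (b - 1) * (a - (a + b) * t) := by positivity
  have hBpos : 0 < B * t ^ (c - 1) * (1 - t) ^ (d - 1) := by positivity
  have hQ : 0 < (c + d) * t - c := pos_of_mul_pos_right (by linarith) hBpos.le
  refine ⟨hQ, ?_⟩
  have hlog := congrArg log (sub_eq_zero.1 h)
  rw [log_mul hBpos.ne' hQ.ne', log_mul (by positivity) (by positivity),
    log_mul (by positivity) (by positivity), log_mul (by positivity) hP.ne',
    log_mul (by positivity) (by positivity), log_mul (by positivity) (by positivity),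
    log_rpow ht0, log_rpow h1t, log_rpow ht0, log_rpow h1t] at hlog
  unfold psi
  linarith

end CaseE

theorem fewer_than_six_roots_case_E_general
    (a b c d A B : ℝ) (hA : 0 < A) (hB : 0 < B)
    (ha : 0 < a) (hb : b < 0) (hc : c < 0) (hd : d < 0)
    (f : ℝ → ℝ)
    (hf : f = fun t : ℝ => 1 - A * t ^ a * (1 - t) ^ b - B * t ^ c * (1 - t) ^ d) :
    {t ∈ Set.Ioo (0 : ℝ) 1 | f t = 0}.encard < 6 := by
  subst hf
  set S := {t ∈ Ioo (0 : ℝ) 1 | 0 < (c + d) * t - c}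
  have hS : S.OrdConnected := ⟨fun x hx y hy t ht =>
    ⟨Icc_subset_Ioo hx.1.1 hy.1.2 ht, by nlinarith [hy.2, ht.2]⟩⟩
  have hS_ne {t} (ht : t ∈ S) : t ≠ 0 ∧ 1 - t ≠ 0 ∧ a - (a + b) * t ≠ 0 ∧ (c + d) * t - c ≠ 0 :=
    ⟨ht.1.1.ne', by linarith [ht.1.2], by nlinarith [ht.1.1, ht.1.2], ht.2.ne'⟩
  calc _ ≤ _ := encard_setOf_eq_zero_le_encard_deriv_add_one ordConnected_Ioo
        fun t ht => hasDerivAt_one_sub_two_rpow_products ht.1.ne' (sub_pos.2 ht.2).ne'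
    _ ≤ {t ∈ S | psi a b c d A B t = 0}.encard + 1 := by
        refine add_le_add_left (encard_le_encard ?_) 1
        rintro t ⟨ht, h⟩
        obtain ⟨hQ, hpsi⟩ := psi_eq_zero_of_deriv_eq_zero hA hB ha hb ht.1 ht.2 h
        exact ⟨⟨ht, hQ⟩, hpsi⟩
    _ ≤ _ := add_le_add_left (encard_setOf_eq_zero_le_encard_deriv_add_one hS fun t ht => by
        obtain ⟨h0, h1, hP, hQ⟩ := hS_ne ht
        exact hasDerivAt_psi h0 h1 hP hQ) 1
    _ ≤ {t | (psiNumerator a b c d).IsRoot t}.encard + 1 + 1 := by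
        refine add_le_add_left (add_le_add_left (encard_le_encard ?_) 1) 1
        rintro t ⟨ht, h⟩
        obtain ⟨h0, h1, hP, hQ⟩ := hS_ne ht
        simpa [h0, h1, hP, hQ] using h
    _ ≤ 3 + 1 + 1 := by
        gcongr
        exact (encard_setOf_isRoot_le (psiNumerator_ne_zero ha.ne' hc.ne (by linarith))).trans
          (by exact_mod_cast natDegree_psiNumerator_le a b c d)
    _ < 6 := by norm_num

/-- Case E: `a > 0` and `b, c, d < 0`.
If `f(t) = 1 − A t^a (1−t)^b − B t^c (1−t)^d` has no degenerate roots in `(0,1)`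
(a root `ζ` is degenerate if `f ζ = 0` and `f' ζ = 0`), then `f` has fewer than 6
roots in `(0,1)`.  (`^` is `Real.rpow`.) -/
theorem fewer_than_six_roots_case_E
    (a b c d A B : ℝ) (hA : 0 < A) (hB : 0 < B)
    (ha : 0 < a) (hb : b < 0) (hc : c < 0) (hd : d < 0)
    (f : ℝ → ℝ)
    (hf : f = fun t : ℝ => 1 - A * t ^ a * (1 - t) ^ b - B * t ^ c * (1 - t) ^ d)
    (hnd : ∀ t ∈ Set.Ioo (0 : ℝ) 1, f t = 0 → deriv f t ≠ 0) :
    {t ∈ Set.Ioo (0 : ℝ) 1 | f t = 0}.encard < 6 :=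
  fewer_than_six_roots_case_E_general a b c d A B hA hB ha hb hc hd f hf
end

section
/- Let A,B > 0 and a,b,c,d ∈ ℝ with a > 0, d > 0, b < 0, and c < 0. If f(t) := 1 − A t^a(1−t)^b − B t^c(1−t)^d has no degenerate roots in (0,1), then f has fewer than 6 roots in the open interval (0,1). -/
open Real Set Polynomial

/-!
Six roots of `f` would give, by Rolle's theorem, five zeros of `f'`. On `(0, 1)`,
`f' = B t^(c-1) (1-t)^(d-1) L₂ - A t^(a-1) (1-t)^(b-1) L₁` with the linear factors
`L₁ = a (1 - t) - b t` and `L₂ = d t - c (1 - t)` positive, so taking logarithms turns the zeros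
of `f'` into zeros of `logRatio`. Rolle's theorem again gives four zeros of its derivative, but
`t (1 - t) L₁ L₂` times that derivative is a cubic polynomial, nonzero because its value at `0`
is `-(a - c) a c ≠ 0`.
-/

theorem encard_zeros_le_encard_zeros_deriv_add_one {s : Set ℝ} [s.OrdConnected] {g : ℝ → ℝ}
    (hg : ContinuousOn g s) :
    {x ∈ s | g x = 0}.encard ≤ {x ∈ s | deriv g x = 0}.encard + 1 := by
  rcases {x ∈ s | deriv g x = 0}.finite_or_infinite with hfin | hinf
  · rw [hfin.encard_eq_coe_toFinset_card]
    by_contra! hlt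
    obtain ⟨S, hSZ, hScard⟩ := exists_subset_encard_eq (Order.add_one_le_of_lt hlt)
    have hSfin : S.Finite := finite_of_encard_eq_coe hScard
    have hinter : hSfin.toFinset.card ≤ hfin.toFinset.card + 1 := by
      refine Finset.card_le_of_interleaved fun x hx y hy hxy _ => ?_
      rw [Finite.mem_toFinset] at hx hy
      obtain ⟨hxs, hgx⟩ := hSZ hx
      obtain ⟨hys, hgy⟩ := hSZ hy
      have hIcc := Set.Icc_subset s hxs hys
      obtain ⟨z, hz, hgz⟩ := exists_deriv_eq_zero hxy (hg.mono hIcc) (hgx.trans hgy.symm)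
      exact ⟨z, hfin.mem_toFinset.2 ⟨hIcc (Ioo_subset_Icc_self hz), hgz⟩, hz⟩
    rw [hSfin.encard_eq_coe_toFinset_card] at hScard
    norm_cast at hScard
    omega
  · simp [hinf.encard_eq]

theorem Polynomial.encard_setOf_isRoot_le_natDegree {R : Type*} [CommRing R] [IsDomain R]
    {p : Polynomial R} (hp : p ≠ 0) : {x | p.IsRoot x}.encard ≤ p.natDegree := by
  classical
  calc {x | p.IsRoot x}.encard ≤ (p.roots.toFinset : Set R).encard :=
        encard_le_encard fun x hx => by simpa [hp] using hx
    _ = p.roots.toFinset.card := encard_coe_eq_coe_finsetCard _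
    _ ≤ p.natDegree := by
      exact_mod_cast (Multiset.toFinset_card_le _).trans (Polynomial.card_roots' p)

theorem hasDerivAt_rpow_mul_one_sub_rpow_s12 (p q : ℝ) {t : ℝ} (ht : t ∈ Ioo 0 1) :
    HasDerivAt (fun s => s ^ p * (1 - s) ^ q)
      (t ^ (p - 1) * (1 - t) ^ (q - 1) * (p * (1 - t) - q * t)) t := by
  obtain ⟨ht0, ht1⟩ := ht
  have h1t : 0 < 1 - t := sub_pos.2 ht1
  have hp := hasDerivAt_rpow_const (p := p) (Or.inl ht0.ne')
  have hq := (hasDerivAt_rpow_const (p := q) (Or.inl h1t.ne')).comp t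
    ((hasDerivAt_id t).const_sub 1)
  refine (hp.mul hq).congr_deriv ?_
  simp only [Function.comp_apply]
  rw [show t ^ p = t ^ (p - 1) * t by rw [← rpow_add_one ht0.ne']; ring_nf,
    show (1 - t) ^ q = (1 - t) ^ (q - 1) * (1 - t) by rw [← rpow_add_one h1t.ne']; ring_nf]
  ring

noncomputable def twoTermFun (A a b B c d t : ℝ) : ℝ :=
  1 - A * t ^ a * (1 - t) ^ b - B * t ^ c * (1 - t) ^ d

theorem hasDerivAt_twoTermFun (A a b B c d : ℝ) {t : ℝ} (ht : t ∈ Ioo 0 1) :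
    HasDerivAt (twoTermFun A a b B c d)
      (B * (t ^ (c - 1) * (1 - t) ^ (d - 1) * (d * t - c * (1 - t)))
        - A * (t ^ (a - 1) * (1 - t) ^ (b - 1) * (a * (1 - t) - b * t))) t := by
  have hfun : twoTermFun A a b B c d
      = fun s => 1 - A * (s ^ a * (1 - s) ^ b) - B * (s ^ c * (1 - s) ^ d) := by
    ext s; simp only [twoTermFun]; ring
  rw [hfun]
  refine ((((hasDerivAt_rpow_mul_one_sub_rpow_s12 a b ht).const_mul A).const_sub 1).sub
    ((hasDerivAt_rpow_mul_one_sub_rpow_s12 c d ht).const_mul B)).congr_deriv ?_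
  ring

noncomputable def logRatio (A a b B c d t : ℝ) : ℝ :=
  log A + (a - c) * log t + (b - d) * log (1 - t) + log (a * (1 - t) - b * t)
    - log B - log (d * t - c * (1 - t))

theorem logRatio_eq_zero_of_deriv_twoTermFun_eq_zero {A a b B c d t : ℝ} (hA : 0 < A) (hB : 0 < B)
    (ht : t ∈ Ioo 0 1) (hab : 0 < a * (1 - t) - b * t) (hcd : 0 < d * t - c * (1 - t))
    (hderiv : deriv (twoTermFun A a b B c d) t = 0) : logRatio A a b B c d t = 0 := by
  obtain ⟨ht0, ht1⟩ := ht
  have h1t : 0 < 1 - t := sub_pos.2 ht1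
  have hlog {K p q L : ℝ} (hK : 0 < K) (hL : 0 < L) :
      log (K * (t ^ p * (1 - t) ^ q * L))
        = log K + p * log t + q * log (1 - t) + log L := by
    rw [log_mul hK.ne' (by positivity), log_mul (by positivity) hL.ne',
      log_mul (by positivity) (by positivity), log_rpow ht0, log_rpow h1t]
    ring
  rw [(hasDerivAt_twoTermFun A a b B c d ⟨ht0, ht1⟩).deriv, sub_eq_zero] at hderiv
  have := congrArg log hderiv
  rw [hlog hB hcd, hlog hA hab] at this
  simp only [logRatio]
  linarith

theorem hasDerivAt_logRatio (A a b B c d : ℝ) {t : ℝ} (ht : t ∈ Ioo 0 1)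
    (hab : a * (1 - t) - b * t ≠ 0) (hcd : d * t - c * (1 - t) ≠ 0) :
    HasDerivAt (logRatio A a b B c d)
      ((a - c) / t - (b - d) / (1 - t) - (a + b) / (a * (1 - t) - b * t)
        - (c + d) / (d * t - c * (1 - t))) t := by
  obtain ⟨ht0, ht1⟩ := ht
  have hid := hasDerivAt_id t
  have hone := hid.const_sub 1
  have h := ((((((hasDerivAt_const t (log A)).add ((hid.log ht0.ne').const_mul (a - c))).add
    ((hone.log (sub_pos.2 ht1).ne').const_mul (b - d))).add
    (((hone.const_mul a).sub (hid.const_mul b)).log hab)).sub_const (log B)).sub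
    (((hid.const_mul d).sub (hone.const_mul c)).log hcd))
  refine h.congr_deriv ?_
  simp only [id, Pi.sub_apply]
  ring

noncomputable def logRatioCubic (a b c d : ℝ) : ℝ[X] :=
  C (a - c) * (1 - X) * (C a * (1 - X) - C b * X) * (C d * X - C c * (1 - X))
    - C (b - d) * X * (C a * (1 - X) - C b * X) * (C d * X - C c * (1 - X))
    - C (a + b) * X * (1 - X) * (C d * X - C c * (1 - X))
    - C (c + d) * X * (1 - X) * (C a * (1 - X) - C b * X)

@[simp]
theorem eval_logRatioCubic (a b c d t : ℝ) : (logRatioCubic a b c d).eval t =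
    (a - c) * (1 - t) * (a * (1 - t) - b * t) * (d * t - c * (1 - t))
      - (b - d) * t * (a * (1 - t) - b * t) * (d * t - c * (1 - t))
      - (a + b) * t * (1 - t) * (d * t - c * (1 - t))
      - (c + d) * t * (1 - t) * (a * (1 - t) - b * t) := by
  simp [logRatioCubic]

theorem natDegree_logRatioCubic_le (a b c d : ℝ) : (logRatioCubic a b c d).natDegree ≤ 3 := by
  unfold logRatioCubic
  compute_degree

theorem logRatioCubic_ne_zero {a b c d : ℝ} (ha : a ≠ 0) (hc : c ≠ 0) (hac : a ≠ c) :
    logRatioCubic a b c d ≠ 0 := by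
  intro h
  have h0 := congrArg (eval 0) h
  simp only [eval_logRatioCubic, eval_zero] at h0
  have : (a - c) * a * c = 0 := by linear_combination -h0
  simp [sub_eq_zero, ha, hc, hac] at this

theorem isRoot_logRatioCubic_of_deriv_logRatio_eq_zero {A a b B c d t : ℝ} (ht : t ∈ Ioo 0 1)
    (hab : a * (1 - t) - b * t ≠ 0) (hcd : d * t - c * (1 - t) ≠ 0)
    (hderiv : deriv (logRatio A a b B c d) t = 0) : (logRatioCubic a b c d).IsRoot t := by
  have ht0 : t ≠ 0 := ht.1.ne'
  have ht1 : 1 - t ≠ 0 := (sub_pos.2 ht.2).ne'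
  have hclear : (logRatioCubic a b c d).eval t = deriv (logRatio A a b B c d) t
      * (t * (1 - t) * (a * (1 - t) - b * t) * (d * t - c * (1 - t))) := by
    rw [(hasDerivAt_logRatio A a b B c d ht hab hcd).deriv, eval_logRatioCubic]
    set L₁ := a * (1 - t) - b * t
    set L₂ := d * t - c * (1 - t)
    field_simp
  rw [IsRoot.def, hclear, hderiv, zero_mul]

section SignConditions

variable {A a b B c d : ℝ} (ha : 0 < a) (hb : b ≤ 0) (hc : c < 0) (hd : 0 ≤ d)
include ha hb hc hd

theorem linearFactors_pos {t : ℝ} (ht : t ∈ Ioo 0 1) :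
    0 < a * (1 - t) - b * t ∧ 0 < d * t - c * (1 - t) :=
  ⟨by nlinarith [ht.1, ht.2], by nlinarith [ht.1, ht.2]⟩

theorem continuousOn_logRatio : ContinuousOn (logRatio A a b B c d) (Ioo 0 1) := fun _ ht =>
  have hL := linearFactors_pos ha hb hc hd ht
  (hasDerivAt_logRatio A a b B c d ht hL.1.ne' hL.2.ne').continuousAt.continuousWithinAt

theorem setOf_deriv_twoTermFun_eq_zero_subset (hA : 0 < A) (hB : 0 < B) :
    {t ∈ Ioo 0 1 | deriv (twoTermFun A a b B c d) t = 0}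
      ⊆ {t ∈ Ioo 0 1 | logRatio A a b B c d t = 0} := fun _ ⟨ht, h⟩ =>
  have hL := linearFactors_pos ha hb hc hd ht
  ⟨ht, logRatio_eq_zero_of_deriv_twoTermFun_eq_zero hA hB ht hL.1 hL.2 h⟩

theorem encard_setOf_deriv_logRatio_eq_zero_le_three :
    {t ∈ Ioo 0 1 | deriv (logRatio A a b B c d) t = 0}.encard ≤ 3 := by
  have hsub : {t ∈ Ioo 0 1 | deriv (logRatio A a b B c d) t = 0}
      ⊆ {t | (logRatioCubic a b c d).IsRoot t} := fun _ ⟨ht, h⟩ =>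
    have hL := linearFactors_pos ha hb hc hd ht
    isRoot_logRatioCubic_of_deriv_logRatio_eq_zero ht hL.1.ne' hL.2.ne' h
  calc _ ≤ {t | (logRatioCubic a b c d).IsRoot t}.encard := encard_le_encard hsub
    _ ≤ (logRatioCubic a b c d).natDegree :=
      encard_setOf_isRoot_le_natDegree (logRatioCubic_ne_zero ha.ne' hc.ne (by linarith))
    _ ≤ 3 := by exact_mod_cast natDegree_logRatioCubic_le a b c d

end SignConditions

theorem fewer_than_six_roots_case_G_general
    (a b c d A B : ℝ) (hA : 0 < A) (hB : 0 < B)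
    (ha : 0 < a) (hd : 0 < d) (hb : b < 0) (hc : c < 0)
    (f : ℝ → ℝ)
    (hf : f = fun t : ℝ => 1 - A * t ^ a * (1 - t) ^ b - B * t ^ c * (1 - t) ^ d) :
    {t ∈ Set.Ioo (0 : ℝ) 1 | f t = 0}.encard < 6 := by
  obtain rfl : f = twoTermFun A a b B c d := hf
  calc {t ∈ Ioo (0 : ℝ) 1 | twoTermFun A a b B c d t = 0}.encard
      ≤ {t ∈ Ioo (0 : ℝ) 1 | deriv (twoTermFun A a b B c d) t = 0}.encard + 1 :=
        encard_zeros_le_encard_zeros_deriv_add_one fun t ht =>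
          (hasDerivAt_twoTermFun A a b B c d ht).continuousAt.continuousWithinAt
    _ ≤ {t ∈ Ioo (0 : ℝ) 1 | logRatio A a b B c d t = 0}.encard + 1 := by
        grw [setOf_deriv_twoTermFun_eq_zero_subset ha hb.le hc hd.le hA hB]
    _ ≤ {t ∈ Ioo (0 : ℝ) 1 | deriv (logRatio A a b B c d) t = 0}.encard + 1 + 1 := by
        gcongr
        exact encard_zeros_le_encard_zeros_deriv_add_one (continuousOn_logRatio ha hb.le hc hd.le)
    _ ≤ 3 + 1 + 1 := by
        gcongr
        exact encard_setOf_deriv_logRatio_eq_zero_le_three ha hb.le hc hd.le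
    _ < 6 := by decide

/-- Case G: `a, d > 0` and `b, c < 0`.
If `f(t) = 1 − A t^a (1−t)^b − B t^c (1−t)^d` has no degenerate roots in `(0,1)`
(a root `ζ` is degenerate if `f ζ = 0` and `f' ζ = 0`), then `f` has fewer than 6
roots in `(0,1)`.  (`^` is `Real.rpow`.) -/
theorem fewer_than_six_roots_case_G
    (a b c d A B : ℝ) (hA : 0 < A) (hB : 0 < B)
    (ha : 0 < a) (hd : 0 < d) (hb : b < 0) (hc : c < 0)
    (f : ℝ → ℝ)
    (hf : f = fun t : ℝ => 1 - A * t ^ a * (1 - t) ^ b - B * t ^ c * (1 - t) ^ d)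
    (hnd : ∀ t ∈ Set.Ioo (0 : ℝ) 1, f t = 0 → deriv f t ≠ 0) :
    {t ∈ Set.Ioo (0 : ℝ) 1 | f t = 0}.encard < 6 :=
  fewer_than_six_roots_case_G_general a b c d A B hA hB ha hd hb hc f hf
end
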